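/- Let L̃ be a 2n×2n real block lower triangular matrix partitioned into n×n blocks L̃ = [[L̃11, 0], [L̃21, L̃22]], and define F = L̃ᵀJL̃ − J, partitioned conformally as F = [[F11, F12], [F21, F22]]. Then the loss of symplecticity Δ(L̃) = ‖F‖₂ satisfies max{‖F11‖₂, ‖F12‖₂} ≤ Δ(L̃) ≤ 2·max{‖F11‖₂, ‖F12‖₂}. -/

import Mathlib

open Matrix
open scoped Matrix.Norms.L2Operator

/-!
Both bounds only use the block structure of `F = L̃ᵀ J L̃ - J`: it is `[[F₁₁, F₁₂], [-F₁₂ᵀ, 0]]`.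
Blocks of a matrix are compressions `P M Q` by partial isometries, so their spectral norms are at
most `‖F‖`. Conversely `F` is the sum of `[[F₁₁, 0], [0, 0]]` and `[[0, F₁₂], [-F₁₂ᵀ, 0]]`; the
latter is a column permutation of the block diagonal `[[F₁₂, 0], [0, -F₁₂ᵀ]]`, whose norm is the
larger of the norms of its diagonal blocks.
-/

noncomputable def symplJ (n : ℕ) : Matrix (Fin n ⊕ Fin n) (Fin n ⊕ Fin n) ℝ :=
  Matrix.fromBlocks 0 1 (-1) 0

lemma EuclideanSpace.norm_sq_eq_inl_add_inr {𝕜 ι κ : Type*} [RCLike 𝕜] [Fintype ι] [Fintype κ]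
    (x : EuclideanSpace 𝕜 (ι ⊕ κ)) :
    ‖x‖ ^ 2 =
      ‖WithLp.toLp 2 (fun i => x (.inl i))‖ ^ 2 + ‖WithLp.toLp 2 (fun i => x (.inr i))‖ ^ 2 := by
  simp [EuclideanSpace.norm_sq_eq, Fintype.sum_sum_type]

namespace Matrix

variable {𝕜 : Type*} [RCLike 𝕜] {l m n p : Type*} [Fintype l] [Fintype m] [Fintype n] [Fintype p]
  [DecidableEq l] [DecidableEq m] [DecidableEq n] [DecidableEq p]

lemma l2_opNorm_one_le : ‖(1 : Matrix n n 𝕜)‖ ≤ 1 := by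
  rw [← diagonal_one, l2_opNorm_diagonal]
  exact pi_norm_le_iff_of_nonneg zero_le_one |>.2 fun _ => norm_one.le

omit [DecidableEq m] in
lemma l2_opNorm_le_one_of_conjTranspose_mul_self_eq_one {A : Matrix m n 𝕜} (hA : Aᴴ * A = 1) :
    ‖A‖ ≤ 1 := by
  have h : ‖A‖ * ‖A‖ ≤ 1 := l2_opNorm_conjTranspose_mul_self A ▸ hA ▸ l2_opNorm_one_le
  nlinarith [norm_nonneg A]

lemma l2_opNorm_one_submatrix_id_le {e : n → m} (he : Function.Injective e) :
    ‖(1 : Matrix m m 𝕜).submatrix id e‖ ≤ 1 := by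
  refine l2_opNorm_le_one_of_conjTranspose_mul_self_eq_one ?_
  rw [conjTranspose_submatrix, conjTranspose_one, ← submatrix_mul _ _ _ _ _ Function.bijective_id,
    Matrix.mul_one, submatrix_one e he]

lemma l2_opNorm_submatrix_le (A : Matrix m n 𝕜) {f : l → m} {g : p → n}
    (hf : Function.Injective f) (hg : Function.Injective g) :
    ‖A.submatrix f g‖ ≤ ‖A‖ := by
  have hrows : ‖(1 : Matrix m m 𝕜).submatrix f id‖ ≤ 1 := by
    rw [← l2_opNorm_conjTranspose, conjTranspose_submatrix, conjTranspose_one]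
    exact l2_opNorm_one_submatrix_id_le hf
  have hfactor : A.submatrix f g
      = (1 : Matrix m m 𝕜).submatrix f id * A * (1 : Matrix n n 𝕜).submatrix id g := by
    conv_lhs => rw [← Matrix.one_mul A, ← Matrix.mul_one (1 * A)]
    rw [submatrix_mul _ _ f id g Function.bijective_id,
      submatrix_mul _ _ f id id Function.bijective_id, submatrix_id_id]
  calc ‖A.submatrix f g‖
      ≤ ‖(1 : Matrix m m 𝕜).submatrix f id‖ * ‖A‖ * ‖(1 : Matrix n n 𝕜).submatrix id g‖ := by
        rw [hfactor]
        exact (l2_opNorm_mul _ _).trans (by gcongr; exact l2_opNorm_mul _ _)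
    _ ≤ 1 * ‖A‖ * 1 := by gcongr; exact l2_opNorm_one_submatrix_id_le hg
    _ = ‖A‖ := by ring

lemma l2_opNorm_transpose (A : Matrix m n ℝ) : ‖Aᵀ‖ = ‖A‖ := by
  rw [← conjTranspose_eq_transpose_of_trivial, l2_opNorm_conjTranspose]

lemma l2_opNorm_toBlocks₁₁_le (M : Matrix (l ⊕ m) (n ⊕ p) 𝕜) : ‖M.toBlocks₁₁‖ ≤ ‖M‖ :=
  l2_opNorm_submatrix_le M Sum.inl_injective Sum.inl_injective

lemma l2_opNorm_toBlocks₁₂_le (M : Matrix (l ⊕ m) (n ⊕ p) 𝕜) : ‖M.toBlocks₁₂‖ ≤ ‖M‖ :=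
  l2_opNorm_submatrix_le M Sum.inl_injective Sum.inr_injective

omit [DecidableEq l] [DecidableEq n] in
lemma l2_opNorm_fromBlocks_zero_zero_le (A : Matrix l m 𝕜) (D : Matrix n p 𝕜) :
    ‖fromBlocks A 0 0 D‖ ≤ max ‖A‖ ‖D‖ := by
  rw [l2_opNorm_def]
  refine ContinuousLinearMap.opNorm_le_bound _ (by positivity) fun x => ?_
  set u : EuclideanSpace 𝕜 m := WithLp.toLp 2 (fun i => x (.inl i))
  set v : EuclideanSpace 𝕜 p := WithLp.toLp 2 (fun i => x (.inr i))
  have hAu : ‖WithLp.toLp 2 (A *ᵥ u.ofLp)‖ ≤ max ‖A‖ ‖D‖ * ‖u‖ :=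
    (l2_opNorm_mulVec A u).trans (by gcongr; exact le_max_left _ _)
  have hDv : ‖WithLp.toLp 2 (D *ᵥ v.ofLp)‖ ≤ max ‖A‖ ‖D‖ * ‖v‖ :=
    (l2_opNorm_mulVec D v).trans (by gcongr; exact le_max_right _ _)
  have hinl : (fun i => (fromBlocks A 0 0 D *ᵥ x.ofLp) (.inl i)) = A *ᵥ u.ofLp := by
    ext i; simp [fromBlocks_mulVec, u, Function.comp_def]
  have hinr : (fun i => (fromBlocks A 0 0 D *ᵥ x.ofLp) (.inr i)) = D *ᵥ v.ofLp := by
    ext i; simp [fromBlocks_mulVec, v, Function.comp_def]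
  rw [← sq_le_sq₀ (by positivity) (by positivity), mul_pow,
    EuclideanSpace.norm_sq_eq_inl_add_inr, EuclideanSpace.norm_sq_eq_inl_add_inr x]
  simp only [LinearEquiv.trans_apply, LinearMap.coe_toContinuousLinearMap', toLpLin_apply,
    hinl, hinr, mul_add]
  gcongr <;> rw [← mul_pow] <;> gcongr

lemma l2_opNorm_fromBlocks_zero_diag_le (B : Matrix l n 𝕜) (C : Matrix m p 𝕜) :
    ‖fromBlocks 0 B C 0‖ ≤ max ‖B‖ ‖C‖ := by
  have hswap : fromBlocks 0 B C 0 = (fromBlocks B 0 0 C).submatrix id Sum.swap := by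
    rw [fromBlocks_submatrix_sum_swap_right, submatrix_id_id]
  rw [hswap]
  exact (l2_opNorm_submatrix_le _ Function.injective_id Sum.swap_leftInverse.injective).trans
    (l2_opNorm_fromBlocks_zero_zero_le B C)

lemma l2_opNorm_fromBlocks_zero₂₂_le (A : Matrix l p 𝕜) (B : Matrix l n 𝕜) (C : Matrix m p 𝕜) :
    ‖fromBlocks A B C (0 : Matrix m n 𝕜)‖ ≤ ‖A‖ + max ‖B‖ ‖C‖ := by
  have hsplit :
      fromBlocks A B C (0 : Matrix m n 𝕜) = fromBlocks A 0 0 0 + fromBlocks 0 B C 0 := by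
    simp [fromBlocks_add]
  calc ‖fromBlocks A B C (0 : Matrix m n 𝕜)‖
      ≤ ‖(fromBlocks A 0 0 0 : Matrix (l ⊕ m) (p ⊕ n) 𝕜)‖ + ‖fromBlocks 0 B C 0‖ :=
        hsplit ▸ norm_add_le _ _
    _ ≤ max ‖A‖ ‖(0 : Matrix m n 𝕜)‖ + max ‖B‖ ‖C‖ :=
        add_le_add (l2_opNorm_fromBlocks_zero_zero_le A 0) (l2_opNorm_fromBlocks_zero_diag_le B C)
    _ = ‖A‖ + max ‖B‖ ‖C‖ := by simp

end Matrix

lemma fromBlocks_transpose_mul_symplJ_mul_sub_symplJ {n : ℕ} (A C D : Matrix (Fin n) (Fin n) ℝ) :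
    (fromBlocks A 0 C D)ᵀ * symplJ n * fromBlocks A 0 C D - symplJ n
      = fromBlocks (Aᵀ * C - Cᵀ * A) (Aᵀ * D - 1) (-(Aᵀ * D - 1)ᵀ) 0 := by
  rw [symplJ, fromBlocks_transpose, fromBlocks_multiply, fromBlocks_multiply, sub_eq_add_neg,
    fromBlocks_neg, fromBlocks_add]
  congr 1 <;> simp [transpose_sub, transpose_mul] <;> abel

/-- For a block lower triangular `L̃ = [[L̃11, 0], [L̃21, L̃22]]` and
`F = L̃ᵀ J L̃ − J` partitioned conformally, the loss of symplecticity
`Δ(L̃) = ‖F‖₂` satisfies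
`max{‖F11‖₂, ‖F12‖₂} ≤ Δ(L̃) ≤ 2 max{‖F11‖₂, ‖F12‖₂}`. -/
theorem loss_of_symplecticity_block_bounds (n : ℕ)
    (L11 L21 L22 : Matrix (Fin n) (Fin n) ℝ)
    (L : Matrix (Fin n ⊕ Fin n) (Fin n ⊕ Fin n) ℝ)
    (hL : L = Matrix.fromBlocks L11 0 L21 L22)
    (F : Matrix (Fin n ⊕ Fin n) (Fin n ⊕ Fin n) ℝ)
    (hF : F = Lᵀ * symplJ n * L - symplJ n) :
    max ‖F.toBlocks₁₁‖ ‖F.toBlocks₁₂‖ ≤ ‖F‖ ∧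
      ‖F‖ ≤ 2 * max ‖F.toBlocks₁₁‖ ‖F.toBlocks₁₂‖ := by
  refine ⟨max_le (l2_opNorm_toBlocks₁₁_le F) (l2_opNorm_toBlocks₁₂_le F), ?_⟩
  subst hF hL
  rw [fromBlocks_transpose_mul_symplJ_mul_sub_symplJ, toBlocks_fromBlocks₁₁, toBlocks_fromBlocks₁₂]
  set F₁₁ := L11ᵀ * L21 - L21ᵀ * L11
  set F₁₂ := L11ᵀ * L22 - 1
  calc _ ≤ ‖F₁₁‖ + max ‖F₁₂‖ ‖-F₁₂ᵀ‖ := l2_opNorm_fromBlocks_zero₂₂_le _ _ _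
    _ = ‖F₁₁‖ + ‖F₁₂‖ := by rw [norm_neg, l2_opNorm_transpose, max_self]
    _ ≤ 2 * max ‖F₁₁‖ ‖F₁₂‖ := by linarith [le_max_left ‖F₁₁‖ ‖F₁₂‖, le_max_right ‖F₁₁‖ ‖F₁₂‖]
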